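/- arXiv:2311.12017 — 2 statements merged into one kernel-verified Lean document; each statement's English description precedes it below -/
import Mathlib

section
/- Fix integers n ≥ 1 and 1 ≤ m₀ ≤ n. For each m₀ ≤ m ≤ n let F_m : {0,1}^m → {0,1}^m be a pairwise independent random function, with F_{m₀},…,F_n mutually independent, and define r := r^{m₀} by the downward recursion r^{n+1} = id and r^m(x) = r^{m+1}(F_m(MSB_m(x)) ‖ LSB_{n−m}(x)). Let 0 ≤ d ≤ n−1 and let x ≠ y ∈ {0,1}^n satisfy LSB_d(x) = LSB_d(y) and LSB_{d+1}(x) ≠ LSB_{d+1}(y). Then Pr[r(x) = r(y)] ≤ 2^{d+1}/2^n. -/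
open scoped BigOperators Classical

/-- Probability of an event under a (finite, weighted) probability mass function. -/
noncomputable def pr {Ω : Type*} [Fintype Ω] (p : Ω → ℝ) (E : Ω → Prop) : ℝ :=
  ∑ ω, if E ω then p ω else 0

/-- The `m` most significant bits of an `n`-bit string (index `0` is most significant). -/
def msb {n : ℕ} (m : ℕ) (h : m ≤ n) (x : Fin n → Bool) : Fin m → Bool :=
  fun s => x ⟨s.1, lt_of_lt_of_le s.2 h⟩

/-- The `k` least significant bits of an `n`-bit string (junk `false` if `k > n`;
in all uses below `k ≤ n`). -/
def lsb {n : ℕ} (k : ℕ) (x : Fin n → Bool) : Fin k → Bool :=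
  fun s => if h : n - k + (s : ℕ) < n then x ⟨n - k + s.1, h⟩ else false

/-- Replace the `m` most significant bits of `x` by `f m` applied to them,
keeping the `n - m` least significant bits: this is `f_m(MSB_m(x)) ‖ LSB_{n-m}(x)`. -/
def rStep (n : ℕ) (f : ∀ m : ℕ, (Fin m → Bool) → (Fin m → Bool)) (m : ℕ) (h : m ≤ n)
    (x : Fin n → Bool) : Fin n → Bool :=
  fun t => if ht : (t : ℕ) < m then f m (msb m h x) ⟨t.1, ht⟩ else x t

/-- The downward recursion `r^{n+1} = id`, `r^m(x) = r^{m+1}(f_m(MSB_m(x)) ‖ LSB_{n-m}(x))`. -/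
def rRec (n : ℕ) (f : ∀ m : ℕ, (Fin m → Bool) → (Fin m → Bool)) (m : ℕ)
    (x : Fin n → Bool) : Fin n → Bool :=
  if h : m ≤ n then rRec n f (m + 1) (rStep n f m h x) else x
termination_by n + 1 - m
decreasing_by omega

/-!
Follow the two strings through the steps `m = m₀, …, n`, conditioning on `F_m` at each step.
If `j` is the highest position where the current strings differ, a step `m ≤ j` leaves
position `j` and everything above it untouched. A step `m > j` feeds two distinct inputs to
`F_m`, so it merges the strings with probability `2^{-m}` (pairwise independence); otherwise they
still differ, now only below `m`. Since `F_m` is independent of the later functions, this gives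
`Pr[collision from step m on] ≤ 2 / 2^{max m (j+1)}` by downward induction on `m`. For the
given `x, y` the highest differing position is `j = n - d - 1`.
-/

section Probability

variable {Ω : Type*} [Fintype Ω] {p : Ω → ℝ}

theorem pr_congr {E E' : Ω → Prop} (h : ∀ ω, E ω ↔ E' ω) : pr p E = pr p E' := by
  simp only [pr, h]

theorem pr_eq_zero {E : Ω → Prop} (h : ∀ ω, ¬ E ω) : pr p E = 0 := by
  simp [pr, h]

theorem pr_nonneg (hp0 : ∀ ω, 0 ≤ p ω) (E : Ω → Prop) : 0 ≤ pr p E :=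
  Finset.sum_nonneg fun ω _ => by split_ifs <;> simp [hp0 ω]

theorem pr_le_one (hp0 : ∀ ω, 0 ≤ p ω) (hp1 : ∑ ω, p ω = 1) (E : Ω → Prop) : pr p E ≤ 1 :=
  hp1 ▸ Finset.sum_le_sum fun ω _ => by split_ifs <;> simp [hp0 ω]

theorem pr_partition {α : Type*} [Fintype α] (X : Ω → α) (E : Ω → Prop) :
    pr p E = ∑ a, pr p (fun ω => X ω = a ∧ E ω) := by
  simp only [pr]
  rw [Finset.sum_comm]
  refine Finset.sum_congr rfl fun ω _ => ?_
  by_cases hE : E ω <;> simp [hE]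

theorem sum_pr_eq_one (hp1 : ∑ ω, p ω = 1) {α : Type*} [Fintype α] (X : Ω → α) :
    ∑ a, pr p (fun ω => X ω = a) = 1 := by
  simpa [pr, hp1] using (pr_partition (p := p) X (fun _ => True)).symm

theorem pr_comp_eq_sum {α : Type*} [Fintype α] (X : Ω → α) (P : α → Prop) [DecidablePred P] :
    pr p (fun ω => P (X ω)) = ∑ a, if P a then pr p (fun ω => X ω = a) else 0 := by
  rw [pr_partition X]
  refine Finset.sum_congr rfl fun a _ => ?_
  split_ifs with ha
  · exact pr_congr fun ω => ⟨And.left, fun h => ⟨h, h ▸ ha⟩⟩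
  · exact pr_eq_zero fun ω h => ha (h.1 ▸ h.2)

theorem pr_eq_sum_mul {α : Type*} [Fintype α] (X : Ω → α) (E : α → Ω → Prop)
    (hE : ∀ a, pr p (fun ω => X ω = a ∧ E a ω) = pr p (fun ω => X ω = a) * pr p (E a)) :
    pr p (fun ω => E (X ω) ω) = ∑ a, pr p (fun ω => X ω = a) * pr p (E a) := by
  rw [pr_partition X]
  refine Finset.sum_congr rfl fun a _ => ?_
  rw [← hE]
  exact pr_congr fun ω => ⟨fun ⟨h, hE⟩ => ⟨h, h ▸ hE⟩, fun ⟨h, hE⟩ => ⟨h, h ▸ hE⟩⟩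

theorem pr_apply_eq_apply {α β : Type*} [Fintype β] (X : Ω → α → β) {a b : α} {q : ℝ}
    (h : ∀ c c', pr p (fun ω => X ω a = c ∧ X ω b = c') = q) :
    pr p (fun ω => X ω a = X ω b) = Fintype.card β * q := by
  rw [pr_partition (fun ω => X ω a)]
  calc ∑ c, pr p (fun ω => X ω a = c ∧ X ω a = X ω b)
      = ∑ c, pr p (fun ω => X ω a = c ∧ X ω b = c) :=
        Finset.sum_congr rfl fun c _ => pr_congr fun ω =>
          ⟨fun ⟨h1, h2⟩ => ⟨h1, h2 ▸ h1⟩, fun ⟨h1, h2⟩ => ⟨h1, h1.trans h2.symm⟩⟩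
    _ = Fintype.card β * q := by simp [h]

end Probability

section Independence

variable {Ω ι : Type*} [Fintype Ω] {p : Ω → ℝ} [DecidableEq ι] {β : ι → Type*}
  [∀ i, Fintype (β i)] {F : ∀ i, Ω → β i} {s : Finset ι} {a : ι}

def IsIndepFamily (p : Ω → ℝ) (F : ∀ i, Ω → β i) (s : Finset ι) : Prop :=
  ∀ g : ∀ i, β i, pr p (fun ω => ∀ i ∈ s, F i ω = g i) = ∏ i ∈ s, pr p (fun ω => F i ω = g i)

theorem IsIndepFamily.of_insert (hp1 : ∑ ω, p ω = 1) (h : IsIndepFamily p F (insert a s))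
    (ha : a ∉ s) : IsIndepFamily p F s := by
  intro g
  have hupd : ∀ b, ∀ i ∈ s, Function.update g a b i = g i :=
    fun b i hi => Function.update_of_ne (ne_of_mem_of_not_mem hi ha) b g
  calc pr p (fun ω => ∀ i ∈ s, F i ω = g i)
      = ∑ b, pr p (fun ω => ∀ i ∈ insert a s, F i ω = Function.update g a b i) := by
        rw [pr_partition (F a)]
        refine Finset.sum_congr rfl fun b _ => pr_congr fun ω => ?_
        simp +contextual only [Finset.forall_mem_insert, Function.update_self, hupd]
    _ = ∑ b, pr p (fun ω => F a ω = b) * ∏ i ∈ s, pr p (fun ω => F i ω = g i) := by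
        refine Finset.sum_congr rfl fun b _ => ?_
        rw [h, Finset.prod_insert ha, Function.update_self]
        congr 1
        exact Finset.prod_congr rfl fun i hi => by rw [hupd b i hi]
    _ = ∏ i ∈ s, pr p (fun ω => F i ω = g i) := by
        rw [← Finset.sum_mul, sum_pr_eq_one hp1, one_mul]

theorem IsIndepFamily.pr_and_eq_mul (hp1 : ∑ ω, p ω = 1) (h : IsIndepFamily p F (insert a s))
    (ha : a ∉ s) {E : Ω → Prop} (hE : ∀ ω ω', (∀ i ∈ s, F i ω = F i ω') → (E ω ↔ E ω'))
    (b : β a) : pr p (fun ω => F a ω = b ∧ E ω) = pr p (fun ω => F a ω = b) * pr p E := by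
  let R : Ω → ∀ i : s, β i := fun ω i => F i ω
  have hR : ∀ ω ω', R ω = R ω' ↔ ∀ i ∈ s, F i ω = F i ω' := by
    simp [R, funext_iff]
  rw [pr_partition R (fun ω => F a ω = b ∧ E ω), pr_partition R E, Finset.mul_sum]
  refine Finset.sum_congr rfl fun g _ => ?_
  by_cases hg : ∃ ω₀, R ω₀ = g ∧ E ω₀
  · obtain ⟨ω₀, rfl, hEω₀⟩ := hg
    set G := Function.update (fun i => F i ω₀) a b
    have hGa : G a = b := Function.update_self a b _
    have hGs : ∀ i ∈ s, G i = F i ω₀ :=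
      fun i hi => Function.update_of_ne (ne_of_mem_of_not_mem hi ha) b _
    calc pr p (fun ω => R ω = R ω₀ ∧ F a ω = b ∧ E ω)
        = pr p (fun ω => ∀ i ∈ insert a s, F i ω = G i) := pr_congr fun ω => by
          rw [Finset.forall_mem_insert, hGa, hR]
          constructor
          · rintro ⟨hs, hb, -⟩
            exact ⟨hb, fun i hi => (hs i hi).trans (hGs i hi).symm⟩
          · rintro ⟨hb, hs⟩
            have hs' : ∀ i ∈ s, F i ω = F i ω₀ := fun i hi => (hs i hi).trans (hGs i hi)
            exact ⟨hs', hb, (hE ω ω₀ hs').2 hEω₀⟩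
      _ = pr p (fun ω => F a ω = b) * pr p (fun ω => ∀ i ∈ s, F i ω = G i) := by
          rw [h, Finset.prod_insert ha, h.of_insert hp1 ha, hGa]
      _ = pr p (fun ω => F a ω = b) * pr p (fun ω => R ω = R ω₀ ∧ E ω) := by
          congr 1
          refine pr_congr fun ω => ?_
          rw [hR]
          constructor
          · intro hs
            have hs' : ∀ i ∈ s, F i ω = F i ω₀ := fun i hi => (hs i hi).trans (hGs i hi)
            exact ⟨hs', (hE ω ω₀ hs').2 hEω₀⟩
          · exact fun ⟨hs, _⟩ i hi => (hs i hi).trans (hGs i hi).symm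
  · push Not at hg
    rw [pr_eq_zero (E := fun ω => R ω = g ∧ F a ω = b ∧ E ω) fun ω h => hg ω h.1 h.2.2,
      pr_eq_zero (E := fun ω => R ω = g ∧ E ω) fun ω h => hg ω h.1 h.2, mul_zero]

end Independence

section BitStrings

variable {n : ℕ}

theorem exists_ne_forall_gt_eq {κ α : Type*} [LinearOrder κ] [Fintype κ] {z w : κ → α}
    (h : z ≠ w) : ∃ j, z j ≠ w j ∧ ∀ i, j < i → z i = w i := by
  obtain ⟨j, hj, hmax⟩ := Finset.exists_max_image (Finset.univ.filter fun i => z i ≠ w i) id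
    (by simpa [Finset.filter_nonempty_iff, funext_iff] using h)
  refine ⟨j, (Finset.mem_filter.1 hj).2, fun i hji => ?_⟩
  by_contra hi
  exact (hmax i (by simpa using hi)).not_gt hji

theorem lsb_eq_lsb_iff (k : ℕ) (x y : Fin n → Bool) :
    lsb k x = lsb k y ↔ ∀ i : Fin n, n - k ≤ i → x i = y i := by
  simp only [funext_iff, lsb]
  constructor
  · intro h i hi
    have := h ⟨i - (n - k), by omega⟩
    simp only [show n - k + (i - (n - k)) = i by omega, i.2, dif_pos] at this
    exact this
  · intro h s
    split_ifs with hs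
    · exact h _ (by simp)
    · rfl

theorem msb_ne_msb {m : ℕ} (hm : m ≤ n) {z w : Fin n → Bool} {j : Fin n} (hjm : (j : ℕ) < m)
    (hj : z j ≠ w j) : msb m hm z ≠ msb m hm w :=
  fun h => hj (congrFun h ⟨j, hjm⟩)

def mapMsb {m : ℕ} (hm : m ≤ n) (h : (Fin m → Bool) → (Fin m → Bool)) (z : Fin n → Bool) :
    Fin n → Bool :=
  fun t => if ht : (t : ℕ) < m then h (msb m hm z) ⟨t, ht⟩ else z t

theorem rStep_eq_mapMsb {m : ℕ} (f : ∀ m : ℕ, (Fin m → Bool) → (Fin m → Bool)) (hm : m ≤ n) :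
    rStep n f m hm = mapMsb hm (f m) :=
  rfl

theorem mapMsb_apply_of_le {m : ℕ} (hm : m ≤ n) (h : (Fin m → Bool) → (Fin m → Bool))
    (z : Fin n → Bool) {t : Fin n} (ht : m ≤ t) : mapMsb hm h z t = z t :=
  dif_neg (by omega)

theorem mapMsb_ne_mapMsb {m : ℕ} (hm : m ≤ n) {h : (Fin m → Bool) → (Fin m → Bool)}
    {z w : Fin n → Bool} (hzw : h (msb m hm z) ≠ h (msb m hm w)) :
    mapMsb hm h z ≠ mapMsb hm h w := by
  obtain ⟨s, hs⟩ := Function.ne_iff.1 hzw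
  intro he
  have := congrFun he ⟨s, s.2.trans_le hm⟩
  simp only [mapMsb, s.2, dif_pos] at this
  exact hs this

theorem rRec_of_le {m : ℕ} (f : ∀ m : ℕ, (Fin m → Bool) → (Fin m → Bool)) (hm : m ≤ n)
    (x : Fin n → Bool) : rRec n f m x = rRec n f (m + 1) (mapMsb hm (f m) x) := by
  rw [rRec, dif_pos hm, rStep_eq_mapMsb]

theorem rRec_of_lt {m : ℕ} (f : ∀ m : ℕ, (Fin m → Bool) → (Fin m → Bool)) (hm : n < m)
    (x : Fin n → Bool) : rRec n f m x = x := by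
  rw [rRec, dif_neg (by omega)]

theorem rRec_congr {m : ℕ} {f g : ∀ m : ℕ, (Fin m → Bool) → (Fin m → Bool)}
    (hfg : ∀ i, m ≤ i → i ≤ n → f i = g i) (x : Fin n → Bool) :
    rRec n f m x = rRec n g m x := by
  by_cases hm : m ≤ n
  · rw [rRec_of_le f hm, rRec_of_le g hm, hfg m le_rfl hm,
      rRec_congr (m := m + 1) (fun i hi hin => hfg i (by omega) hin)]
  · rw [rRec_of_lt f (by omega), rRec_of_lt g (by omega)]
termination_by n + 1 - m

end BitStrings

section Collision

variable {n : ℕ} {Ω : Type*} [Fintype Ω] {p : Ω → ℝ}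
  {F : ∀ m : ℕ, Ω → (Fin m → Bool) → (Fin m → Bool)}

variable (p F) in
noncomputable def collisionPr (m : ℕ) (z w : Fin n → Bool) : ℝ :=
  pr p (fun ω => rRec n (fun k => F k ω) m z = rRec n (fun k => F k ω) m w)

theorem collisionPr_eq_sum (hp1 : ∑ ω, p ω = 1) {m : ℕ} (hm : m ≤ n)
    (hInd : IsIndepFamily p F (Finset.Icc m n)) (z w : Fin n → Bool) :
    collisionPr p F m z w =
      ∑ h, pr p (fun ω => F m ω = h) * collisionPr p F (m + 1) (mapMsb hm h z) (mapMsb hm h w) := by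
  simp only [collisionPr, rRec_of_le _ hm]
  refine pr_eq_sum_mul (F m) (fun h ω => rRec n (fun k => F k ω) (m + 1) (mapMsb hm h z) =
    rRec n (fun k => F k ω) (m + 1) (mapMsb hm h w)) fun h => ?_
  rw [← Finset.insert_Icc_add_one_left_eq_Icc hm] at hInd
  refine hInd.pr_and_eq_mul hp1 (by simp) (fun ω ω' hωω' => ?_) h
  have hF : ∀ i, m + 1 ≤ i → i ≤ n → F i ω = F i ω' :=
    fun i hi hin => hωω' i (Finset.mem_Icc.2 ⟨hi, hin⟩)
  rw [rRec_congr hF, rRec_congr hF]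

theorem pr_apply_eq_apply_of_pairwise {m : ℕ} {G : Ω → (Fin m → Bool) → (Fin m → Bool)}
    (hG : ∀ x y, x ≠ y → ∀ a b, pr p (fun ω => G ω x = a ∧ G ω y = b) = ((1 : ℝ) / 2 ^ m) ^ 2)
    {x y : Fin m → Bool} (hxy : x ≠ y) : pr p (fun ω => G ω x = G ω y) = 1 / 2 ^ m := by
  rw [pr_apply_eq_apply G (hG x y hxy)]
  simp only [Fintype.card_fun, Fintype.card_bool, Fintype.card_fin, Nat.cast_pow, Nat.cast_ofNat]
  field_simp

theorem sum_mul_collisionPr_le (hp0 : ∀ ω, 0 ≤ p ω) (hp1 : ∑ ω, p ω = 1) {m : ℕ} (hm : m ≤ n)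
    {z w : Fin n → Bool} (hhigh : ∀ i : Fin n, m ≤ i → z i = w i)
    (hpair : pr p (fun ω => F m ω (msb m hm z) = F m ω (msb m hm w)) = 1 / 2 ^ m)
    (hnext : ∀ z' w' : Fin n → Bool, z' ≠ w' → (∀ i : Fin n, m ≤ i → z' i = w' i) →
      collisionPr p F (m + 1) z' w' ≤ 1 / 2 ^ m) :
    ∑ h, pr p (fun ω => F m ω = h) * collisionPr p F (m + 1) (mapMsb hm h z) (mapMsb hm h w) ≤
      2 / 2 ^ m := by
  calc _ ≤ ∑ h, ((if h (msb m hm z) = h (msb m hm w) then pr p (fun ω => F m ω = h) else 0) +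
          pr p (fun ω => F m ω = h) * (1 / 2 ^ m)) := by
        refine Finset.sum_le_sum fun h _ => ?_
        have hq := pr_nonneg hp0 (fun ω => F m ω = h)
        split_ifs with hh
        · calc _ ≤ pr p (fun ω => F m ω = h) * 1 :=
                mul_le_mul_of_nonneg_left (pr_le_one hp0 hp1 _) hq
            _ ≤ _ := by
                rw [mul_one]
                exact le_add_of_nonneg_right (mul_nonneg hq (by positivity))
        · rw [zero_add]
          refine mul_le_mul_of_nonneg_left (hnext _ _ (mapMsb_ne_mapMsb hm hh) fun i hi => ?_) hq
          rw [mapMsb_apply_of_le _ _ _ hi, mapMsb_apply_of_le _ _ _ hi, hhigh i hi]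
    _ = 2 / 2 ^ m := by
        rw [Finset.sum_add_distrib,
          ← pr_comp_eq_sum (F m) (fun h => h (msb m hm z) = h (msb m hm w)),
          ← Finset.sum_mul, sum_pr_eq_one hp1, hpair]
        ring

theorem collisionPr_le (hp0 : ∀ ω, 0 ≤ p ω) (hp1 : ∑ ω, p ω = 1) (m : ℕ)
    (hFpair : ∀ k, m ≤ k → k ≤ n → ∀ x y : Fin k → Bool, x ≠ y → ∀ a b : Fin k → Bool,
      pr p (fun ω => F k ω x = a ∧ F k ω y = b) = ((1 : ℝ) / 2 ^ k) ^ 2)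
    (hInd : IsIndepFamily p F (Finset.Icc m n)) {z w : Fin n → Bool} {j : Fin n}
    (hj : z j ≠ w j) (htop : ∀ i, j < i → z i = w i) :
    collisionPr p F m z w ≤ 2 / 2 ^ max m ((j : ℕ) + 1) := by
  by_cases hm : m ≤ n
  swap
  · rw [collisionPr,
      pr_eq_zero fun ω h => hj (by simpa [rRec_of_lt _ (not_le.1 hm)] using congrFun h j)]
    positivity
  have hInd' : IsIndepFamily p F (Finset.Icc (m + 1) n) := by
    rw [← Finset.insert_Icc_add_one_left_eq_Icc hm] at hInd
    exact hInd.of_insert hp1 (by simp)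
  have ih {z' w' : Fin n → Bool} {j' : Fin n} (hj' : z' j' ≠ w' j')
      (htop' : ∀ i, j' < i → z' i = w' i) :=
    collisionPr_le hp0 hp1 (m + 1) (fun k hk => hFpair k (by omega)) hInd' hj' htop'
  rw [collisionPr_eq_sum hp1 hm hInd]
  rcases le_or_gt m j with hmj | hjm
  · -- step `m` does not touch position `j` or the positions above it
    have hmax : max (m + 1) ((j : ℕ) + 1) = max m ((j : ℕ) + 1) := by omega
    calc _ ≤ ∑ h, pr p (fun ω => F m ω = h) * (2 / 2 ^ max m ((j : ℕ) + 1)) := by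
          refine Finset.sum_le_sum fun h _ => mul_le_mul_of_nonneg_left ?_ (pr_nonneg hp0 _)
          refine hmax ▸ ih ?_ fun i hi => ?_
          · rwa [mapMsb_apply_of_le _ _ _ hmj, mapMsb_apply_of_le _ _ _ hmj]
          · rw [mapMsb_apply_of_le _ _ _ (hmj.trans hi.le),
              mapMsb_apply_of_le _ _ _ (hmj.trans hi.le), htop i hi]
      _ = 2 / 2 ^ max m ((j : ℕ) + 1) := by
          rw [← Finset.sum_mul, sum_pr_eq_one hp1, one_mul]
  · rw [max_eq_left hjm]
    refine sum_mul_collisionPr_le hp0 hp1 hm (fun i hi => htop i (hjm.trans_le hi))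
      (pr_apply_eq_apply_of_pairwise (hFpair m le_rfl hm) (msb_ne_msb hm hjm hj))
      fun z' w' hzw hhigh => ?_
    obtain ⟨j', hj', htop'⟩ := exists_ne_forall_gt_eq hzw
    have hj'm : (j' : ℕ) < m := by
      by_contra! hmj'
      exact hj' (hhigh j' hmj')
    calc _ ≤ 2 / 2 ^ max (m + 1) ((j' : ℕ) + 1) := ih hj' htop'
      _ = 1 / 2 ^ m := by
          rw [max_eq_left (by omega), pow_succ]
          field_simp
termination_by n + 1 - m

end Collision

theorem statement6_general
    (n m₀ : ℕ)
    (Ω : Type*) [Fintype Ω] (p : Ω → ℝ)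
    (hp0 : ∀ ω, 0 ≤ p ω) (hp1 : ∑ ω, p ω = 1)
    (F : ∀ m : ℕ, Ω → (Fin m → Bool) → (Fin m → Bool))
    -- each `F m` (for `m₀ ≤ m ≤ n`) is a pairwise independent random function
    (hFpair : ∀ m, m₀ ≤ m → m ≤ n → ∀ x y : Fin m → Bool, x ≠ y →
      ∀ a b : Fin m → Bool,
        pr p (fun ω => F m ω x = a ∧ F m ω y = b) = ((1 : ℝ) / 2 ^ m) ^ 2)
    -- `F_{m₀}, …, F_n` are mutually independent
    (hInd : ∀ g : ∀ m : ℕ, (Fin m → Bool) → (Fin m → Bool),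
      pr p (fun ω => ∀ m ∈ Finset.Icc m₀ n, F m ω = g m)
        = ∏ m ∈ Finset.Icc m₀ n, pr p (fun ω => F m ω = g m))
    (d : ℕ) (x y : Fin n → Bool)
    (hlow : lsb d x = lsb d y) (hdiff : lsb (d + 1) x ≠ lsb (d + 1) y) :
    pr p (fun ω => rRec n (fun m => F m ω) m₀ x = rRec n (fun m => F m ω) m₀ y)
      ≤ 2 ^ (d + 1) / 2 ^ n := by
  have hhigh : ∀ i : Fin n, n - d ≤ i → x i = y i := (lsb_eq_lsb_iff d x y).1 hlow
  obtain ⟨j, hjd, hj⟩ : ∃ j : Fin n, n - (d + 1) ≤ j ∧ x j ≠ y j := by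
    simpa [lsb_eq_lsb_iff] using hdiff
  have hj_top : (j : ℕ) + 1 = n - d := by
    by_contra
    exact hj (hhigh j (by omega))
  calc _ ≤ 2 / 2 ^ max m₀ ((j : ℕ) + 1) :=
        collisionPr_le hp0 hp1 m₀ hFpair hInd hj fun i hi => hhigh i (by omega)
    _ ≤ 2 / 2 ^ (n - d) := by
        gcongr
        · norm_num
        · omega
    _ = 2 ^ (d + 1) / 2 ^ n := by
        rw [div_eq_div_iff (by positivity) (by positivity), ← pow_succ', ← pow_add]
        congr 1
        omega

/-- If `x ≠ y` agree on their last `d` bits but differ on their last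
`d + 1` bits, then the collision probability of the multi-cut labelling map satisfies
`Pr[r(x) = r(y)] ≤ 2^{d+1} / 2^n`. -/
theorem statement6
    (n m₀ : ℕ) (hn : 1 ≤ n) (hm₀ : 1 ≤ m₀) (hm₀n : m₀ ≤ n)
    (Ω : Type*) [Fintype Ω] (p : Ω → ℝ)
    (hp0 : ∀ ω, 0 ≤ p ω) (hp1 : ∑ ω, p ω = 1)
    (F : ∀ m : ℕ, Ω → (Fin m → Bool) → (Fin m → Bool))
    -- each `F m` (for `m₀ ≤ m ≤ n`) is a pairwise independent random function
    (hFpair : ∀ m, m₀ ≤ m → m ≤ n → ∀ x y : Fin m → Bool, x ≠ y →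
      ∀ a b : Fin m → Bool,
        pr p (fun ω => F m ω x = a ∧ F m ω y = b) = ((1 : ℝ) / 2 ^ m) ^ 2)
    -- `F_{m₀}, …, F_n` are mutually independent
    (hInd : ∀ g : ∀ m : ℕ, (Fin m → Bool) → (Fin m → Bool),
      pr p (fun ω => ∀ m ∈ Finset.Icc m₀ n, F m ω = g m)
        = ∏ m ∈ Finset.Icc m₀ n, pr p (fun ω => F m ω = g m))
    (d : ℕ) (hd : d + 1 ≤ n) (x y : Fin n → Bool) (hxy : x ≠ y)
    (hlow : lsb d x = lsb d y) (hdiff : lsb (d + 1) x ≠ lsb (d + 1) y) :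
    pr p (fun ω => rRec n (fun m => F m ω) m₀ x = rRec n (fun m => F m ω) m₀ y)
      ≤ 2 ^ (d + 1) / 2 ^ n :=
  statement6_general n m₀ Ω p hp0 hp1 F hFpair hInd d x y hlow hdiff
end

section
/- Let m ≥ 1. Let F : {0,1}^m → {0,1}^m be a random function and let k be a uniformly random key for a 4-wise independent family {h_k : {0,1}^{2m} → {0,1}}, with k independent of F, and suppose Pr[F(i) = F(j)] ≤ 2^{1−m} for all distinct i, j ∈ {0,1}^m. Define the random 2^m × 2^m matrix T by T_{i,j} = (−1)^{h_k(F(i) ‖ j)} and set ρ := T·Tᵀ/2^{2m}. Then with probability at least 1 − 2^{2−m/2}, the von Neumann entropy of ρ is at least m/4. -/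
open scoped BigOperators Classical
open Matrix

/-- Squared Frobenius (Hilbert–Schmidt) norm of a real matrix. -/
def frobSq {a b : Type*} [Fintype a] [Fintype b] (M : Matrix a b ℝ) : ℝ :=
  ∑ i, ∑ j, M i j ^ 2

/-- Von Neumann entropy (base 2) of a Hermitian matrix, defined via its eigenvalues;
junk value `0` if the matrix is not Hermitian. -/
noncomputable def vnEntropy {𝕜 : Type*} [RCLike 𝕜] {d : Type*} [Fintype d] [DecidableEq d]
    (ρ : Matrix d d 𝕜) : ℝ :=
  if h : ρ.IsHermitian then -∑ i, h.eigenvalues i * Real.logb 2 (h.eigenvalues i) else 0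

/-- Concatenation `a ‖ b` of two `m`-bit strings into a `2m`-bit string
(`a` is the most significant half). -/
def concatHalf {m : ℕ} (a b : Fin m → Bool) : Fin (2 * m) → Bool :=
  fun t => if ht : (t : ℕ) < m then a ⟨t.1, ht⟩
    else if ht2 : (t : ℕ) - m < m then b ⟨t.1 - m, ht2⟩ else false

/-!
Expanding `‖T Tᵀ‖_F²` gives a sum of fourth moments `E[T_ij T_i'j T_ij' T_i'j']`. Such a moment
is `1` when `i = i'` or `j = j'`. Otherwise, conditioning on `F` (independent of the hash key),
the four hashed points `F i ‖ j, F i' ‖ j, F i ‖ j', F i' ‖ j'` are distinct unless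
`F i = F i'`, so by 4-wise independence the moment equals `Pr[F i = F i'] ≤ 2^{1-m}`. Hence the
purity satisfies `E[tr ρ²] ≤ 4 · 2^{-m}`, and by Markov `tr ρ² < 2^{-m/2}` outside an event of
probability at most `2^{2-m/2}`. Finally `S(ρ) ≥ -log₂ tr ρ²` (weighted AM-GM on the
eigenvalues), which then exceeds `m/2`.
-/

def boolSign (b : Bool) : ℝ := if b then -1 else 1

lemma boolSign_mul_self (b : Bool) : boolSign b * boolSign b = 1 := by
  cases b <;> norm_num [boolSign]

lemma boolSign_eq_one_add (b : Bool) : boolSign b = 1 + -2 * if b = true then 1 else 0 := by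
  cases b <;> norm_num [boolSign]

section Probability

variable {Ω : Type*} [Fintype Ω] {p : Ω → ℝ}

lemma pr_eq_sum_mul_ite (E : Ω → Prop) : pr p E = ∑ ω, p ω * if E ω then 1 else 0 := by
  simp [pr, mul_ite]

lemma pr_mono (hp0 : ∀ ω, 0 ≤ p ω) {E E' : Ω → Prop} (h : ∀ ω, E ω → E' ω) :
    pr p E ≤ pr p E' := by
  refine Finset.sum_le_sum fun ω _ => ?_
  by_cases hE : E ω
  · simp [hE, h ω hE]
  · simp only [hE, if_false]
    split_ifs
    exacts [hp0 ω, le_rfl]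

lemma pr_not (hp1 : ∑ ω, p ω = 1) (E : Ω → Prop) : pr p (fun ω => ¬ E ω) = 1 - pr p E := by
  rw [← hp1, pr, pr, eq_sub_iff_add_eq, ← Finset.sum_add_distrib]
  refine Finset.sum_congr rfl fun ω _ => ?_
  by_cases hE : E ω <;> simp [hE]

lemma pr_le_le_sum_mul_div (hp0 : ∀ ω, 0 ≤ p ω) {X : Ω → ℝ} (hX : ∀ ω, 0 ≤ X ω) {t : ℝ}
    (ht : 0 < t) :
    pr p (fun ω => t ≤ X ω) ≤ (∑ ω, p ω * X ω) / t := by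
  rw [pr_eq_sum_mul_ite, Finset.sum_div]
  refine Finset.sum_le_sum fun ω _ => ?_
  rw [le_div_iff₀ ht, mul_assoc]
  gcongr
  · exact hp0 ω
  · split_ifs with h
    · simpa using h
    · simpa using hX ω

lemma one_sub_div_le_pr (hp0 : ∀ ω, 0 ≤ p ω) (hp1 : ∑ ω, p ω = 1) {X : Ω → ℝ}
    (hX : ∀ ω, 0 ≤ X ω) {t μ : ℝ} (ht : 0 < t) (hμ : ∑ ω, p ω * X ω ≤ μ) {E : Ω → Prop}
    (hE : ∀ ω, X ω < t → E ω) : 1 - μ / t ≤ pr p E :=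
  calc 1 - μ / t ≤ 1 - pr p (fun ω => t ≤ X ω) := by
        have := (pr_le_le_sum_mul_div hp0 hX ht).trans (div_le_div_of_nonneg_right hμ ht.le)
        linarith
    _ = pr p (fun ω => ¬ t ≤ X ω) := (pr_not hp1 _).symm
    _ ≤ pr p E := pr_mono hp0 fun ω h => hE ω (not_le.mp h)

lemma sum_mul_comp_eq_sum_pr {α : Type*} [Fintype α] (X : Ω → α) (f : α → ℝ) :
    ∑ ω, p ω * f (X ω) = ∑ a, pr p (fun ω => X ω = a) * f a := by
  simp only [pr, Finset.sum_mul, ite_mul, zero_mul]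
  rw [Finset.sum_comm]
  simp

lemma sum_mul_comp_of_indep {α β : Type*} [Fintype α] [Fintype β] (F : Ω → α) (H : Ω → β)
    (hInd : ∀ a b, pr p (fun ω => F ω = a ∧ H ω = b)
      = pr p (fun ω => F ω = a) * pr p (fun ω => H ω = b))
    (φ : α → β → ℝ) :
    ∑ ω, p ω * φ (F ω) (H ω) = ∑ a, pr p (fun ω => F ω = a) * ∑ ω, p ω * φ a (H ω) := by
  calc ∑ ω, p ω * φ (F ω) (H ω)
      = ∑ ab : α × β, pr p (fun ω => (F ω, H ω) = ab) * φ ab.1 ab.2 :=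
        sum_mul_comp_eq_sum_pr (fun ω => (F ω, H ω)) fun ab => φ ab.1 ab.2
    _ = ∑ a, pr p (fun ω => F ω = a) * ∑ b, pr p (fun ω => H ω = b) * φ a b := by
        simp only [Fintype.sum_prod_type, Prod.ext_iff, hInd, Finset.mul_sum, mul_assoc]
    _ = _ := by simp only [sum_mul_comp_eq_sum_pr H]

def KWiseIndependent {α : Type*} (p : Ω → ℝ) (H : Ω → α → Bool) (k : ℕ) : Prop :=
  ∀ (s : Finset α) (b : α → Bool), s.card ≤ k →
    pr p (fun ω => ∀ u ∈ s, H ω u = b u) = ((1 : ℝ) / 2) ^ s.card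

lemma KWiseIndependent.sum_mul_prod_boolSign_eq_zero {α : Type*} [DecidableEq α]
    {H : Ω → α → Bool} {k : ℕ} (hH : KWiseIndependent p H k) {s : Finset α} (hs : s.card ≤ k)
    (hne : s.Nonempty) : ∑ ω, p ω * ∏ u ∈ s, boolSign (H ω u) = 0 := by
  have expand : ∀ ω, ∏ u ∈ s, boolSign (H ω u)
      = ∑ t ∈ s.powerset, (-2 : ℝ) ^ t.card * if ∀ u ∈ t, H ω u = true then 1 else 0 := by
    intro ω
    simp only [boolSign_eq_one_add, add_comm (1 : ℝ), Finset.prod_add, Finset.prod_const_one,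
      mul_one, Finset.prod_mul_distrib, Finset.prod_const, Finset.prod_boole]
  calc ∑ ω, p ω * ∏ u ∈ s, boolSign (H ω u)
      = ∑ t ∈ s.powerset, (-2 : ℝ) ^ t.card * pr p (fun ω => ∀ u ∈ t, H ω u = true) := by
        simp only [expand, pr_eq_sum_mul_ite, Finset.mul_sum]
        rw [Finset.sum_comm]
        -- `congr` reconciles the `Decidable` instances of the two `if`s (`pr` is classical)
        exact Finset.sum_congr rfl fun t _ => Finset.sum_congr rfl fun ω _ => by
          rw [mul_left_comm]; congr
    _ = ∑ t ∈ s.powerset, (((-1 : ℤ) ^ t.card : ℤ) : ℝ) := by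
        refine Finset.sum_congr rfl fun t ht => ?_
        rw [hH t _ ((Finset.card_le_card (Finset.mem_powerset.mp ht)).trans hs), ← mul_pow]
        norm_num
    _ = 0 := by exact_mod_cast Finset.sum_powerset_neg_one_pow_card_of_nonempty hne

end Probability

section FrobeniusNorm

variable {a b : Type*} [Fintype a] [Fintype b]

lemma frobSq_nonneg (M : Matrix a b ℝ) : 0 ≤ frobSq M :=
  Finset.sum_nonneg fun _ _ => Finset.sum_nonneg fun _ _ => sq_nonneg _

lemma frobSq_smul (c : ℝ) (M : Matrix a b ℝ) : frobSq (c • M) = c ^ 2 * frobSq M := by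
  simp [frobSq, Finset.mul_sum, mul_pow]

lemma frobSq_of_mul_self_eq_one {T : Matrix a b ℝ}
    (hT : ∀ i j, T i j * T i j = 1) : frobSq T = Fintype.card a * Fintype.card b := by
  simp [frobSq, sq, hT]

lemma trace_mul_transpose_eq_frobSq (T : Matrix a b ℝ) : (T * Tᵀ).trace = frobSq T := by
  simp [trace, mul_apply, frobSq, sq]

lemma frobSq_mul_transpose (A : Matrix a b ℝ) :
    frobSq (A * Aᵀ) = ∑ i, ∑ i', ∑ j, ∑ j', A i j * A i' j * A i j' * A i' j' := by
  simp only [frobSq, mul_apply, transpose_apply, sq, Finset.sum_mul_sum]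
  exact Finset.sum_congr rfl fun i _ => Finset.sum_congr rfl fun i' _ =>
    Finset.sum_congr rfl fun j _ => Finset.sum_congr rfl fun j' _ => by ring

lemma frobSq_pos_of_trace_ne_zero {M : Matrix a a ℝ} (h : M.trace ≠ 0) : 0 < frobSq M := by
  obtain ⟨i, -, hi⟩ := Finset.exists_ne_zero_of_sum_ne_zero h
  calc 0 < M i i ^ 2 := pow_pos (abs_pos.mpr hi) 2 |>.trans_eq (sq_abs _)
    _ ≤ ∑ j, M i j ^ 2 := Finset.single_le_sum (fun j _ => sq_nonneg (M i j)) (Finset.mem_univ i)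
    _ ≤ frobSq M := Finset.single_le_sum (fun i _ => Finset.sum_nonneg fun j _ => sq_nonneg (M i j))
          (Finset.mem_univ i)

end FrobeniusNorm

section Entropy

lemma neg_logb_sum_sq_le_neg_sum_mul_logb {ι : Type*} [Fintype ι] {w : ι → ℝ}
    (h0 : ∀ i, 0 ≤ w i) (h1 : ∑ i, w i = 1) :
    -Real.logb 2 (∑ i, w i ^ 2) ≤ -∑ i, w i * Real.logb 2 (w i) := by
  have hpow_pos : ∀ i, 0 < w i ^ w i := fun i => by
    rcases (h0 i).eq_or_lt with h | h
    · simp [← h]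
    · exact Real.rpow_pos_of_pos h _
  have amgm : ∏ i, w i ^ w i ≤ ∑ i, w i ^ 2 := by
    simpa [sq] using Real.geom_mean_le_arith_mean_weighted Finset.univ w w
      (fun i _ => h0 i) h1 (fun i _ => h0 i)
  have hlog : ∑ i, w i * Real.log (w i) ≤ Real.log (∑ i, w i ^ 2) := by
    calc ∑ i, w i * Real.log (w i) = Real.log (∏ i, w i ^ w i) := by
          rw [Real.log_prod fun i _ => (hpow_pos i).ne']
          refine Finset.sum_congr rfl fun i _ => ?_
          rcases (h0 i).eq_or_lt with h | h
          · simp [← h]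
          · rw [Real.log_rpow h]
      _ ≤ Real.log (∑ i, w i ^ 2) :=
          Real.log_le_log (Finset.prod_pos fun i _ => hpow_pos i) amgm
  simp only [Real.logb, mul_div_assoc', ← Finset.sum_div, neg_le_neg_iff]
  exact div_le_div_of_nonneg_right hlog (Real.log_pos one_lt_two).le

variable {a b : Type*} [Fintype a] [Fintype b]

lemma Matrix.IsHermitian.sum_eigenvalues_sq_eq_frobSq [DecidableEq a] {A : Matrix a a ℝ}
    (hA : A.IsHermitian) : ∑ i, hA.eigenvalues i ^ 2 = frobSq A := by
  set U : Matrix a a ℝ := (hA.eigenvectorUnitary : Matrix a a ℝ)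
  have hU : star U * U = 1 := Matrix.mem_unitaryGroup_iff'.mp hA.eigenvectorUnitary.2
  have hspec : A = U * diagonal hA.eigenvalues * star U := by
    simpa [Unitary.conjStarAlgAut_apply] using hA.spectral_theorem
  have hAA : A * A = U * diagonal (fun i => hA.eigenvalues i ^ 2) * star U := by
    conv_lhs => rw [hspec]
    calc _ = U * diagonal hA.eigenvalues * (star U * U) * diagonal hA.eigenvalues * star U := by
          simp only [Matrix.mul_assoc]
      _ = _ := by
          rw [hU, Matrix.mul_one, Matrix.mul_assoc U, diagonal_mul_diagonal]
          simp only [sq]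
  have hAt : Aᵀ = A := by simpa [conjTranspose_eq_transpose_of_trivial] using hA.eq
  calc ∑ i, hA.eigenvalues i ^ 2 = (A * A).trace := by
        rw [hAA, trace_mul_cycle, hU, Matrix.one_mul, trace_diagonal]
    _ = frobSq A := by rw [← trace_mul_transpose_eq_frobSq, hAt]

lemma Matrix.PosSemidef.neg_logb_frobSq_le_vnEntropy [DecidableEq a] {ρ : Matrix a a ℝ}
    (hρ : ρ.PosSemidef) (htr : ρ.trace = 1) : -Real.logb 2 (frobSq ρ) ≤ vnEntropy ρ := by
  rw [vnEntropy, dif_pos hρ.isHermitian, ← hρ.isHermitian.sum_eigenvalues_sq_eq_frobSq]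
  refine neg_logb_sum_sq_le_neg_sum_mul_logb hρ.eigenvalues_nonneg ?_
  simpa [hρ.isHermitian.trace_eq_sum_eigenvalues] using htr

lemma Matrix.PosSemidef.le_vnEntropy_of_frobSq_le [DecidableEq a] {ρ : Matrix a a ℝ}
    (hρ : ρ.PosSemidef) (htr : ρ.trace = 1) {x : ℝ} (hx : frobSq ρ ≤ 2 ^ (-x)) :
    x ≤ vnEntropy ρ := by
  have hpos : 0 < frobSq ρ := frobSq_pos_of_trace_ne_zero (htr ▸ one_ne_zero)
  calc x = -Real.logb 2 (2 ^ (-x)) := by rw [Real.logb_rpow two_pos one_lt_two.ne', neg_neg]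
    _ ≤ -Real.logb 2 (frobSq ρ) := neg_le_neg (Real.logb_le_logb_of_le one_lt_two hpos hx)
    _ ≤ vnEntropy ρ := hρ.neg_logb_frobSq_le_vnEntropy htr

lemma le_vnEntropy_smul_mul_transpose [DecidableEq a] (T : Matrix a b ℝ) {c x : ℝ}
    (hc : 0 ≤ c) (hcT : c * frobSq T = 1) (hx : frobSq (c • (T * Tᵀ)) ≤ 2 ^ (-x)) :
    x ≤ vnEntropy (c • (T * Tᵀ)) := by
  have hpsd : (T * Tᵀ).PosSemidef := by
    simpa [conjTranspose_eq_transpose_of_trivial] using posSemidef_self_mul_conjTranspose T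
  refine (hpsd.smul hc).le_vnEntropy_of_frobSq_le ?_ hx
  rw [trace_smul, trace_mul_transpose_eq_frobSq, smul_eq_mul, hcT]

end Entropy

lemma concatHalf_injective2 {m : ℕ} : Function.Injective2 (concatHalf (m := m)) := by
  intro a a' b b' h
  constructor
  · funext i
    simpa [concatHalf, i.2] using congrFun h ⟨i, by omega⟩
  · funext i
    simpa [concatHalf, i.2] using congrFun h ⟨m + i, by omega⟩

section FourthMoment

variable {Ω : Type*} [Fintype Ω] {p : Ω → ℝ}

lemma KWiseIndependent.sum_mul_boolSign_four_eq {α β γ : Type*} [DecidableEq α]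
    {H : Ω → α → Bool} (hH : KWiseIndependent p H 4) (hp1 : ∑ ω, p ω = 1)
    {f : β → γ → α} (hf : Function.Injective2 f) (x y : β) {j j' : γ} (hj : j ≠ j') :
    ∑ ω, p ω * (boolSign (H ω (f x j)) * boolSign (H ω (f y j))
      * boolSign (H ω (f x j')) * boolSign (H ω (f y j'))) = if x = y then 1 else 0 := by
  split_ifs with hxy
  · subst hxy
    simp [boolSign_mul_self, hp1]
  -- for `x ≠ y` the four hashed points are distinct, so 4-wise independence applies
  have h1 : f x j ∉ ({f y j, f x j', f y j'} : Finset α) := by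
    simp only [Finset.mem_insert, Finset.mem_singleton, not_or]
    exact ⟨fun h => hxy (hf h).1, fun h => hj (hf h).2, fun h => hxy (hf h).1⟩
  have h2 : f y j ∉ ({f x j', f y j'} : Finset α) := by
    simp only [Finset.mem_insert, Finset.mem_singleton, not_or]
    exact ⟨fun h => hxy (hf h).1.symm, fun h => hj (hf h).2⟩
  have h3 : f x j' ∉ ({f y j'} : Finset α) := by
    simpa using fun h => hxy (hf h).1
  have hprod : ∀ ω, boolSign (H ω (f x j)) * boolSign (H ω (f y j))
      * boolSign (H ω (f x j')) * boolSign (H ω (f y j'))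
      = ∏ u ∈ {f x j, f y j, f x j', f y j'}, boolSign (H ω u) := by
    intro ω
    rw [Finset.prod_insert h1, Finset.prod_insert h2, Finset.prod_insert h3,
      Finset.prod_singleton]
    ring
  simp only [hprod]
  exact hH.sum_mul_prod_boolSign_eq_zero Finset.card_le_four (Finset.insert_nonempty _ _)

variable {ι κ α : Type*} [Fintype ι] [Fintype κ] [Fintype α] [DecidableEq α]

lemma sum_mul_four_entries_le {F : Ω → ι → κ} {H : Ω → α → Bool} {δ : ℝ}
    (hp1 : ∑ ω, p ω = 1) (hH : KWiseIndependent p H 4)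
    (hInd : ∀ g hh, pr p (fun ω => F ω = g ∧ H ω = hh)
      = pr p (fun ω => F ω = g) * pr p (fun ω => H ω = hh))
    (hcol : ∀ i i', i ≠ i' → pr p (fun ω => F ω i = F ω i') ≤ δ) (hδ : 0 ≤ δ)
    {f : κ → ι → α} (hf : Function.Injective2 f) {T : Ω → Matrix ι ι ℝ}
    (hT : ∀ ω i j, T ω i j = boolSign (H ω (f (F ω i) j))) (i i' j j' : ι) :
    ∑ ω, p ω * (T ω i j * T ω i' j * T ω i j' * T ω i' j')
      ≤ (if i = i' then 1 else 0) + (if j = j' then 1 else 0) + δ := by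
  have hsq : ∀ ω i j, T ω i j * T ω i j = 1 := fun ω i j => by rw [hT]; exact boolSign_mul_self _
  by_cases hii : i = i'
  · have hone : ∀ ω, T ω i j * T ω i' j * T ω i j' * T ω i' j' = 1 := fun ω => by
      subst hii
      calc _ = (T ω i j * T ω i j) * (T ω i j' * T ω i j') := by ring
        _ = 1 := by rw [hsq, hsq, one_mul]
    simp only [hone, mul_one, hp1, if_pos hii]
    split_ifs <;> linarith
  by_cases hjj : j = j'
  · have hone : ∀ ω, T ω i j * T ω i' j * T ω i j' * T ω i' j' = 1 := fun ω => by
      subst hjj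
      calc _ = (T ω i j * T ω i j) * (T ω i' j * T ω i' j) := by ring
        _ = 1 := by rw [hsq, hsq, one_mul]
    simp only [hone, mul_one, hp1, if_pos hjj, if_neg hii]
    linarith
  let φ : (ι → κ) → (α → Bool) → ℝ := fun g hh => boolSign (hh (f (g i) j))
    * boolSign (hh (f (g i') j)) * boolSign (hh (f (g i) j')) * boolSign (hh (f (g i') j'))
  calc ∑ ω, p ω * (T ω i j * T ω i' j * T ω i j' * T ω i' j')
      = ∑ g, pr p (fun ω => F ω = g) * ∑ ω, p ω * φ g (H ω) := by
        simp only [hT]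
        exact sum_mul_comp_of_indep F H hInd φ
    _ = ∑ g, pr p (fun ω => F ω = g) * if g i = g i' then 1 else 0 := by
        simp only [φ, hH.sum_mul_boolSign_four_eq hp1 hf _ _ hjj]
    _ = pr p (fun ω => F ω i = F ω i') := by
        rw [pr_eq_sum_mul_ite, sum_mul_comp_eq_sum_pr F fun g => if g i = g i' then 1 else 0]
    _ ≤ _ := by simp only [if_neg hii, if_neg hjj, zero_add]; exact hcol i i' hii

lemma sum_mul_frobSq_mul_transpose_le {T : Ω → Matrix ι ι ℝ} {δ : ℝ}
    (hbound : ∀ i i' j j', ∑ ω, p ω * (T ω i j * T ω i' j * T ω i j' * T ω i' j')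
      ≤ (if i = i' then 1 else 0) + (if j = j' then 1 else 0) + δ) :
    ∑ ω, p ω * frobSq (T ω * (T ω)ᵀ) ≤ (2 + δ * Fintype.card ι) * Fintype.card ι ^ 3 := by
  calc ∑ ω, p ω * frobSq (T ω * (T ω)ᵀ)
      = ∑ i, ∑ i', ∑ j, ∑ j', ∑ ω, p ω * (T ω i j * T ω i' j * T ω i j' * T ω i' j') := by
        simp only [frobSq_mul_transpose, Finset.mul_sum]
        rw [Finset.sum_comm]
        refine Finset.sum_congr rfl fun i _ => ?_
        rw [Finset.sum_comm]
        refine Finset.sum_congr rfl fun i' _ => ?_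
        rw [Finset.sum_comm]
        exact Finset.sum_congr rfl fun j _ => Finset.sum_comm
    _ ≤ ∑ i : ι, ∑ i' : ι, ∑ j : ι, ∑ j' : ι,
          ((if i = i' then 1 else 0) + (if j = j' then 1 else 0) + δ) := by
        gcongr with i _ i' _ j _ j' _
        exact hbound i i' j j'
    _ = _ := by
        simp only [Finset.sum_add_distrib, Finset.sum_const, Finset.card_univ, nsmul_eq_mul,
          Finset.sum_boole, ← Finset.mul_sum, Finset.filter_eq, Finset.mem_univ, if_true,
          Finset.card_singleton, Nat.cast_one, mul_one]
        ring

end FourthMoment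

lemma two_rpow_two_sub_half (m : ℕ) :
    (2 : ℝ) ^ (2 - m / 2 : ℝ) = 4 / 2 ^ m / 2 ^ (-(m / 2 : ℝ)) := by
  have hhalf : (2 : ℝ) ^ m = 2 ^ (m / 2 : ℝ) * 2 ^ (m / 2 : ℝ) := by
    rw [← Real.rpow_add two_pos, add_halves, Real.rpow_natCast]
  rw [Real.rpow_neg two_pos.le, Real.rpow_sub two_pos, Real.rpow_two, hhalf]
  field_simp
  ring

theorem statement9_general
    (m : ℕ)
    (Ω : Type*) [Fintype Ω] (p : Ω → ℝ)
    (hp0 : ∀ ω, 0 ≤ p ω) (hp1 : ∑ ω, p ω = 1)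
    (F : Ω → (Fin m → Bool) → (Fin m → Bool))
    (Hf : Ω → (Fin (2 * m) → Bool) → Bool)
    -- `Hf` comes from a 4-wise independent family with a uniformly random key
    (hH4 : ∀ (s : Finset (Fin (2 * m) → Bool)) (b : (Fin (2 * m) → Bool) → Bool),
      s.card ≤ 4 →
      pr p (fun ω => ∀ u ∈ s, Hf ω u = b u) = ((1 : ℝ) / 2) ^ s.card)
    -- the key of `Hf` is independent of `F`
    (hInd : ∀ (g : (Fin m → Bool) → (Fin m → Bool)) (hh : (Fin (2 * m) → Bool) → Bool),
      pr p (fun ω => F ω = g ∧ Hf ω = hh)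
        = pr p (fun ω => F ω = g) * pr p (fun ω => Hf ω = hh))
    -- collision bound for `F`
    (hcol : ∀ i j : Fin m → Bool, i ≠ j → pr p (fun ω => F ω i = F ω j) ≤ 2 / 2 ^ m)
    (T : Ω → Matrix (Fin m → Bool) (Fin m → Bool) ℝ)
    (hT : ∀ ω i j, T ω i j = if Hf ω (concatHalf (F ω i) j) then (-1 : ℝ) else 1) :
    1 - (2 : ℝ) ^ ((2 : ℝ) - (m : ℝ) / 2)
      ≤ pr p (fun ω =>
          (m : ℝ) / 4
            ≤ vnEntropy (((1 : ℝ) / 2 ^ (2 * m)) • (T ω * (T ω)ᵀ))) := by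
  set c : ℝ := 1 / 2 ^ (2 * m) with hc
  have hsign : ∀ ω i j, T ω i j = boolSign (Hf ω (concatHalf (F ω i) j)) := hT
  have hcard : (Fintype.card (Fin m → Bool) : ℝ) = 2 ^ m := by simp
  have hcT : ∀ ω, c * frobSq (T ω) = 1 := fun ω => by
    rw [frobSq_of_mul_self_eq_one fun i j => by rw [hsign]; exact boolSign_mul_self _, hcard, hc]
    field_simp
    ring
  have hE : ∑ ω, p ω * frobSq (c • (T ω * (T ω)ᵀ)) ≤ 4 / 2 ^ m := by
    have h := sum_mul_frobSq_mul_transpose_le (sum_mul_four_entries_le hp1 hH4 hInd hcol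
      (by positivity) concatHalf_injective2 hsign)
    rw [hcard] at h
    simp only [frobSq_smul, mul_left_comm (p _), ← Finset.mul_sum]
    calc _ ≤ c ^ 2 * ((2 + 2 / 2 ^ m * 2 ^ m) * (2 ^ m) ^ 3) := by gcongr
      _ = 4 / 2 ^ m := by rw [hc]; field_simp; ring
  refine (le_of_eq ?_).trans (one_sub_div_le_pr hp0 hp1 (fun ω => frobSq_nonneg _)
    (t := 2 ^ (-(m / 2 : ℝ))) (by positivity) hE fun ω hω => ?_)
  · rw [two_rpow_two_sub_half]
  · exact le_trans (by linarith [(m.cast_nonneg : (0 : ℝ) ≤ m)])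
      (le_vnEntropy_smul_mul_transpose (T ω) (by positivity) (hcT ω) hω.le)

/-- Single-cut construction: if `F` has collision probability at most
`2^{1-m}` and `Hf` comes from a 4-wise independent family (independent of `F`), then with
probability at least `1 - 2^{2-m/2}` the von Neumann entropy of `ρ = T Tᵀ / 2^{2m}` is at
least `m/4`. -/
theorem statement9
    (m : ℕ) (hm : 1 ≤ m)
    (Ω : Type*) [Fintype Ω] (p : Ω → ℝ)
    (hp0 : ∀ ω, 0 ≤ p ω) (hp1 : ∑ ω, p ω = 1)
    (F : Ω → (Fin m → Bool) → (Fin m → Bool))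
    (Hf : Ω → (Fin (2 * m) → Bool) → Bool)
    -- `Hf` comes from a 4-wise independent family with a uniformly random key
    (hH4 : ∀ (s : Finset (Fin (2 * m) → Bool)) (b : (Fin (2 * m) → Bool) → Bool),
      s.card ≤ 4 →
      pr p (fun ω => ∀ u ∈ s, Hf ω u = b u) = ((1 : ℝ) / 2) ^ s.card)
    -- the key of `Hf` is independent of `F`
    (hInd : ∀ (g : (Fin m → Bool) → (Fin m → Bool)) (hh : (Fin (2 * m) → Bool) → Bool),
      pr p (fun ω => F ω = g ∧ Hf ω = hh)
        = pr p (fun ω => F ω = g) * pr p (fun ω => Hf ω = hh))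
    -- collision bound for `F`
    (hcol : ∀ i j : Fin m → Bool, i ≠ j → pr p (fun ω => F ω i = F ω j) ≤ 2 / 2 ^ m)
    (T : Ω → Matrix (Fin m → Bool) (Fin m → Bool) ℝ)
    (hT : ∀ ω i j, T ω i j = if Hf ω (concatHalf (F ω i) j) then (-1 : ℝ) else 1) :
    1 - (2 : ℝ) ^ ((2 : ℝ) - (m : ℝ) / 2)
      ≤ pr p (fun ω =>
          (m : ℝ) / 4
            ≤ vnEntropy (((1 : ℝ) / 2 ^ (2 * m)) • (T ω * (T ω)ᵀ))) :=
  statement9_general m Ω p hp0 hp1 F Hf hH4 hInd hcol T hT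
end
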